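/- arXiv:2011.03153 — 3 statements merged into one kernel-verified Lean document; each statement's English description precedes it below -/
import Mathlib

section
/- Let 0 ≤ p_L ≤ p_U ≤ 1 and a_{01}, a_{10} > 0 with a = a_{01}/(a_{01}+a_{10}). The maximum regret over p ∈ [p_L, p_U] of decision d ∈ {0,1} under binary loss equals max(a_{01} - (a_{01}+a_{10})p_L, 0) if d = 1 and max((a_{01}+a_{10})p_U - a_{01}, 0) if d = 0. Therefore d* = 1[ max(a - p_L, 0) ≤ max(p_U - a, 0) ] minimizes maximum regret, and the minimax regret equals min( max(a_{01} - (a_{01}+a_{10})p_L, 0), max((a_{01}+a_{10})p_U - a_{01}, 0) ). -/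
/-- minimax regret forecast under binary loss. -/
theorem stmt_4 (pL pU a01 a10 : ℝ)
    (hpL : 0 ≤ pL) (hLU : pL ≤ pU) (hpU : pU ≤ 1)
    (ha01 : 0 < a01) (ha10 : 0 < a10)
    (a : ℝ) (ha : a = a01 / (a01 + a10))
    (regret : ℝ → Bool → ℝ)
    (hreg : ∀ p d, regret p d =
      (if d then a01 * (1 - p) else a10 * p) - min (a10 * p) (a01 * (1 - p)))
    (MR : Bool → ℝ)
    (hMR : ∀ d, MR d = sSup ((fun p => regret p d) '' Set.Icc pL pU))
    (dstar : Bool) (hdstar : dstar = decide (max (a - pL) 0 ≤ max (pU - a) 0)) :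
    IsGreatest ((fun p => regret p true) '' Set.Icc pL pU)
      (max (a01 - (a01 + a10) * pL) 0) ∧
    IsGreatest ((fun p => regret p false) '' Set.Icc pL pU)
      (max ((a01 + a10) * pU - a01) 0) ∧
    (∀ d : Bool, MR dstar ≤ MR d) ∧
    MR dstar = min (max (a01 - (a01 + a10) * pL) 0) (max ((a01 + a10) * pU - a01) 0) := by
  have hs : (0:ℝ) < a01 + a10 := by linarith
  have key1 : ∀ p, regret p true = max (a01 - (a01 + a10) * p) 0 := by
    intro p
    rw [hreg, if_pos rfl]
    rcases le_total (a10 * p) (a01 * (1 - p)) with h | h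
    · rw [min_eq_left h, max_eq_left (by nlinarith)]; ring
    · rw [min_eq_right h, max_eq_right (by nlinarith)]; ring
  have key2 : ∀ p, regret p false = max ((a01 + a10) * p - a01) 0 := by
    intro p
    rw [hreg, if_neg (by simp)]
    rcases le_total (a10 * p) (a01 * (1 - p)) with h | h
    · rw [min_eq_left h, max_eq_right (by nlinarith)]; ring
    · rw [min_eq_right h, max_eq_left (by nlinarith)]; ring
  have hg1 : IsGreatest ((fun p => regret p true) '' Set.Icc pL pU)
      (max (a01 - (a01 + a10) * pL) 0) := by
    constructor
    · exact ⟨pL, ⟨le_refl _, hLU⟩, key1 pL⟩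
    · rintro x ⟨p, hp, rfl⟩
      show regret p true ≤ _
      rw [key1]
      exact max_le_max (by nlinarith [hp.1]) le_rfl
  have hg2 : IsGreatest ((fun p => regret p false) '' Set.Icc pL pU)
      (max ((a01 + a10) * pU - a01) 0) := by
    constructor
    · exact ⟨pU, ⟨hLU, le_refl _⟩, key2 pU⟩
    · rintro x ⟨p, hp, rfl⟩
      show regret p false ≤ _
      rw [key2]
      exact max_le_max (by nlinarith [hp.2]) le_rfl
  have hMRt : MR true = max (a01 - (a01 + a10) * pL) 0 := by
    rw [hMR]; exact hg1.csSup_eq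
  have hMRf : MR false = max ((a01 + a10) * pU - a01) 0 := by
    rw [hMR]; exact hg2.csSup_eq
  have ha' : a * (a01 + a10) = a01 := by rw [ha]; field_simp
  have hA : max (a01 - (a01 + a10) * pL) 0 = (a01 + a10) * max (a - pL) 0 := by
    rw [mul_max_of_nonneg _ _ (le_of_lt hs), mul_zero]
    congr 1; nlinarith
  have hB : max ((a01 + a10) * pU - a01) 0 = (a01 + a10) * max (pU - a) 0 := by
    rw [mul_max_of_nonneg _ _ (le_of_lt hs), mul_zero]
    congr 1; nlinarith
  refine ⟨hg1, hg2, ?_, ?_⟩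
  · intro d
    rcases le_or_gt (max (a - pL) 0) (max (pU - a) 0) with h | h
    · have hd : dstar = true := by rw [hdstar]; exact decide_eq_true h
      rw [hd]
      cases d
      · rw [hMRt, hMRf, hA, hB]
        exact mul_le_mul_of_nonneg_left h (le_of_lt hs)
      · exact le_refl _
    · have hd : dstar = false := by rw [hdstar]; simp [not_le.mpr h]
      rw [hd]
      cases d
      · exact le_refl _
      · rw [hMRt, hMRf, hA, hB]
        exact mul_le_mul_of_nonneg_left (le_of_lt h) (le_of_lt hs)
  · rcases le_or_gt (max (a - pL) 0) (max (pU - a) 0) with h | h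
    · have hd : dstar = true := by rw [hdstar]; exact decide_eq_true h
      rw [hd, hMRt, min_eq_left]
      rw [hA, hB]
      exact mul_le_mul_of_nonneg_left h (le_of_lt hs)
    · have hd : dstar = false := by rw [hdstar]; simp [not_le.mpr h]
      rw [hd, hMRf, min_eq_right]
      rw [hA, hB]
      exact mul_le_mul_of_nonneg_left (le_of_lt h) (le_of_lt hs)
end

section
/- Let 0 ≤ p_L ≤ p_U ≤ 1. With symmetric binary loss (a_{01} = a_{10} = 1), the minimax forecast d_mm = 1[1 ≤ p_L + p_U] and the minimax regret forecast d_mmr = 1[max(1/2 - p_L, 0) ≤ max(p_U - 1/2, 0)] are equal. -/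
/-- equivalence of minimax and minimax regret forecasts under
symmetric binary loss. -/
theorem stmt_5 (pL pU : ℝ) (hpL : 0 ≤ pL) (hLU : pL ≤ pU) (hpU : pU ≤ 1) :
    (1 ≤ pL + pU) ↔ (max (1/2 - pL) 0 ≤ max (pU - 1/2) 0) := by
  constructor
  · intro h
    exact max_le_max (by linarith) le_rfl
  · intro h
    by_contra hc
    push_neg at hc
    have hlt : max (pU - 1/2) 0 < 1/2 - pL := max_lt (by linarith) (by linarith)
    exact absurd (le_trans (le_max_left _ _) h) (not_le.mpr hlt)
end

section
/- Let 0 ≤ p_L ≤ p_U ≤ 1. If p_L < p_U, then inf over d ∈ (0,1) of sup over p ∈ [p_L, p_U] of (-p·log d - (1-p)·log(1-d)) is achieved at d = p_U when p_U ≤ 1/2, at d = p_L when p_L ≥ 1/2, and at d = 1/2 when p_L < 1/2 < p_U. That is, the minimax forecast under log loss coincides with the minimax forecast under quadratic loss. -/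
/-!
For a fixed forecast `d` the log loss is affine in the success probability `p`, with slope
`log (1 - d) - log d`. Clipping `[p_L, p_U]` at `1/2` gives a point `q` of the interval at which
this slope, taken at `d = q`, makes `q` a worst case: `q` is the right end when the slope is
nonnegative, the left end when it is nonpositive, and any point when it vanishes. So the
worst-case risk of `q` is its entropy `logLoss q q`, which by Gibbs' inequality is at most the risk
of any forecast `d` at the single probability `q`, hence at most the worst-case risk of `d`.
-/

open Real Set

noncomputable def logLoss (p d : ℝ) : ℝ := -p * log d - (1 - p) * log (1 - d)

lemma logLoss_sub_logLoss (p q d : ℝ) :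
    logLoss p d - logLoss q d = (p - q) * (log (1 - d) - log d) := by
  unfold logLoss
  ring

lemma logLoss_self_le {p d : ℝ} (hp₀ : 0 < p) (hp₁ : p < 1) (hd₀ : 0 < d) (hd₁ : d < 1) :
    logLoss p p ≤ logLoss p d := by
  have hq₀ : 0 < 1 - p := by linarith
  have hsucc : p * (log d - log p) ≤ d - p :=
    calc p * (log d - log p) = p * log (d / p) := by rw [log_div hd₀.ne' hp₀.ne']
      _ ≤ p * (d / p - 1) := by gcongr; exact log_le_sub_one_of_pos (by positivity)
      _ = d - p := by field_simp
  have hfail : (1 - p) * (log (1 - d) - log (1 - p)) ≤ p - d :=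
    calc (1 - p) * (log (1 - d) - log (1 - p)) = (1 - p) * log ((1 - d) / (1 - p)) := by
          rw [log_div (by linarith) hq₀.ne']
      _ ≤ (1 - p) * ((1 - d) / (1 - p) - 1) := by
          gcongr; exact log_le_sub_one_of_pos (div_pos (by linarith) hq₀)
      _ = p - d := by field_simp; ring
  unfold logLoss
  linear_combination hsucc + hfail

lemma sSup_logLoss_le_of_isSaddle {pL pU q d : ℝ} (hq : q ∈ Icc pL pU) (hq₀ : 0 < q) (hq₁ : q < 1)
    (hd₀ : 0 < d) (hd₁ : d < 1) (hslope : ∀ p ∈ Icc pL pU, (p - q) * (log (1 - q) - log q) ≤ 0) :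
    sSup ((fun p ↦ logLoss p q) '' Icc pL pU) ≤ sSup ((fun p ↦ logLoss p d) '' Icc pL pU) :=
  calc sSup ((fun p ↦ logLoss p q) '' Icc pL pU)
      ≤ logLoss q q := by
        refine csSup_le (Set.Nonempty.image _ ⟨q, hq⟩) ?_
        rintro _ ⟨p, hp, rfl⟩
        linarith [logLoss_sub_logLoss p q q, hslope p hp]
    _ ≤ logLoss q d := logLoss_self_le hq₀ hq₁ hd₀ hd₁
    _ ≤ sSup ((fun p ↦ logLoss p d) '' Icc pL pU) :=
        ContinuousOn.le_sSup_image_Icc (f := fun p ↦ logLoss p d) (by unfold logLoss; fun_prop) hq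

/-- the minimax forecast under log loss coincides with the minimax
forecast under quadratic loss. -/
theorem stmt_9 (pL pU : ℝ) (hpL : 0 ≤ pL) (hLU : pL ≤ pU) (hpU : pU ≤ 1)
    (hlt : pL < pU)
    (S : ℝ → ℝ)
    (hS : ∀ d, S d =
      sSup ((fun p => -p * Real.log d - (1 - p) * Real.log (1 - d)) '' Set.Icc pL pU)) :
    (pU ≤ 1/2 → ∀ d ∈ Set.Ioo (0:ℝ) 1, S pU ≤ S d) ∧
    (1/2 ≤ pL → ∀ d ∈ Set.Ioo (0:ℝ) 1, S pL ≤ S d) ∧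
    (pL < 1/2 → 1/2 < pU → ∀ d ∈ Set.Ioo (0:ℝ) 1, S (1/2) ≤ S d) := by
  have minimax : ∀ q ∈ Icc pL pU, 0 < q → q < 1 →
      (∀ p ∈ Icc pL pU, (p - q) * (log (1 - q) - log q) ≤ 0) →
      ∀ d ∈ Ioo (0 : ℝ) 1, S q ≤ S d := fun q hq hq₀ hq₁ hslope d hd ↦ by
    rw [hS, hS]
    exact sSup_logLoss_le_of_isSaddle hq hq₀ hq₁ hd.1 hd.2 hslope
  refine ⟨fun hU ↦ ?_, fun hL ↦ ?_, fun hL hU ↦ ?_⟩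
  · have hU₀ : 0 < pU := hpL.trans_lt hlt
    refine minimax pU ⟨hLU, le_rfl⟩ hU₀ (by linarith) fun p hp ↦ ?_
    exact mul_nonpos_of_nonpos_of_nonneg (by linarith [hp.2])
      (sub_nonneg.2 (log_le_log hU₀ (by linarith)))
  · refine minimax pL ⟨le_rfl, hLU⟩ (by linarith) (hlt.trans_le hpU) fun p hp ↦ ?_
    exact mul_nonpos_of_nonneg_of_nonpos (sub_nonneg.2 hp.1)
      (sub_nonpos.2 (log_le_log (by linarith) (by linarith)))
  · exact minimax (1/2) ⟨hL.le, hU.le⟩ (by norm_num) (by norm_num) fun p _ ↦ by norm_num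
end
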